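/- Let F be any CNF. If F has a Resolution refutation of width w and size S, then F has a tree-like Res(w) refutation with at most 5·S nodes in which every DNF line contains at most S terms; consequently, the total number of terms appearing in this tree-like Res(w) refutation is O(S²). -/
import Mathlib


/-- Propositional variables. -/
abbrev PVar := ℕ

/-- A literal: a variable together with a sign (`true` = the positive literal `x`,
`false` = the negated literal `¬x`). -/
abbrev PLit := PVar × Bool

/-- Negation of a literal. -/
def PLit.neg (m : PLit) : PLit := (m.1, !m.2)

/-- A clause: a finite set of literals, read as their disjunction.
Its width is its cardinality. -/
abbrev PClause := Finset PLit

/-- A CNF formula: a finite set of clauses, read as their conjunction. -/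
abbrev PCnf := Finset PClause

/-- A term: a finite set of literals, read as their conjunction. -/
abbrev PTerm := Finset PLit

/-- A DNF: a finite set of terms, read as their disjunction. -/
abbrev PDnf := Finset PTerm

/-- `D` is an `l`-DNF: every term of `D` has at most `l` literals. -/
def IsLDnf (l : ℕ) (D : PDnf) : Prop := ∀ T ∈ D, T.card ≤ l

/-- The negation `¬C` of a clause `C = m₁ ∨ … ∨ m_t`, i.e. the term `¬m₁ ∧ … ∧ ¬m_t`. -/
def PClause.negTerm (C : PClause) : PTerm := C.image PLit.neg

/-- A clause viewed as a DNF consisting of singleton terms. -/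
def PClause.toDnf (C : PClause) : PDnf := C.image (fun m => ({m} : PTerm))

/-- The disjunction `¬l₁ ∨ … ∨ ¬l_s` of the negations of the literals of the
term `T = l₁ ∧ … ∧ l_s`, as a DNF of singleton terms. -/
def PTerm.negLits (T : PTerm) : PDnf := T.image (fun m => ({m.neg} : PTerm))

/-- Binary proof trees whose nodes are labelled by DNFs. -/
inductive PTree : Type where
  | leaf (D : PDnf) : PTree
  | node (D : PDnf) (t₁ t₂ : PTree) : PTree

namespace PTree

/-- The label at the root of the tree. -/
def concl : PTree → PDnf
  | .leaf D => D
  | .node D _ _ => D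

/-- The number of leaves of the tree. -/
def leaves : PTree → ℕ
  | .leaf _ => 1
  | .node _ t₁ t₂ => t₁.leaves + t₂.leaves

/-- The total number of nodes (proof lines) of the tree. -/
def size : PTree → ℕ
  | .leaf _ => 1
  | .node _ t₁ t₂ => t₁.size + t₂.size + 1

/-- The list of all labels occurring in the tree. -/
def labels : PTree → List PDnf
  | .leaf D => [D]
  | .node D t₁ t₂ => D :: (t₁.labels ++ t₂.labels)

/-- Structural validity of a tree-like Res derivation from the set `H` of
hypothesis DNFs: every leaf is a hypothesis or an axiom
`(l₁∧…∧l_s) ∨ ¬l₁ ∨ … ∨ ¬l_s` (with `s ≥ 1`), and every internal node with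
children `A ∨ (l₁∧…∧l_s)` and `B ∨ ¬l₁ ∨ … ∨ ¬l_s` is labelled by the
cut `A ∨ B`. -/
def okStruct (H : Finset PDnf) : PTree → Prop
  | .leaf D => D ∈ H ∨ ∃ T : PTerm, T.Nonempty ∧ D = insert T T.negLits
  | .node D t₁ t₂ => t₁.okStruct H ∧ t₂.okStruct H ∧
      ∃ (T : PTerm) (A B : PDnf), T.Nonempty ∧
        t₁.concl = insert T A ∧ t₂.concl = B ∪ T.negLits ∧ D = A ∪ B

/-- A valid tree-like Res(l) derivation from the hypotheses `H`: it is
structurally valid and every proof line is an `l`-DNF. -/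
def valid (H : Finset PDnf) (l : ℕ) (t : PTree) : Prop :=
  t.okStruct H ∧ ∀ D ∈ t.labels, IsLDnf l D

/-- The number of leaves labelled by an axiom rather than by a hypothesis. -/
def axLeafCount (H : Finset PDnf) : PTree → ℕ
  | .leaf D => if D ∈ H then 0 else 1
  | .node _ t₁ t₂ => t₁.axLeafCount H + t₂.axLeafCount H

end PTree

/-- The set of hypothesis DNFs associated to a CNF: each clause read as a DNF
of singleton terms. -/
def PCnf.toHyps (F : PCnf) : Finset PDnf := F.image PClause.toDnf

/-- `t` is a tree-like Res(l) refutation of the CNF `F`: a valid tree-like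
Res(l) derivation from the clauses of `F` whose root is the empty DNF. -/
def TreeResRefutation (F : PCnf) (l : ℕ) (t : PTree) : Prop :=
  t.valid F.toHyps l ∧ t.concl = ∅

/-- Resolution inference: the clause `C` is obtained from two clauses
`A ∨ x` and `B ∨ ¬x` occurring in `prev` by the resolution rule, yielding `A ∨ B`. -/
def ResStep (prev : List PClause) (C : PClause) : Prop :=
  ∃ A ∈ prev, ∃ B ∈ prev, ∃ x : PVar,
    (x, true) ∈ A ∧ (x, false) ∈ B ∧
    C = A.erase (x, true) ∪ B.erase (x, false)

/-- `π` is a resolution derivation from the CNF `F`: every clause of `π`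
belongs to `F` or follows from two earlier clauses by the resolution rule. -/
def IsResDeriv (F : PCnf) (π : List PClause) : Prop :=
  ∀ i : Fin π.length, π.get i ∈ F ∨ ResStep (π.take i) (π.get i)

/-- `π` is a resolution derivation of the clause `C` from the CNF `F`
(its last clause is `C`); a refutation when `C = ∅`. Its size is `π.length`
and its width is the maximum cardinality of a clause in `π`. -/
def ResDerivOf (F : PCnf) (C : PClause) (π : List PClause) : Prop :=
  IsResDeriv F π ∧ π.getLast? = some C

/-- A partial assignment: maps some variables to truth values. -/
abbrev PAssign := PVar → Option Bool

/-- The restriction `F|ρ`: delete every clause containing a literal satisfied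
by `ρ`, and delete from the remaining clauses every literal falsified by `ρ`. -/
def PCnf.restrict (F : PCnf) (ρ : PAssign) : PCnf :=
  (F.filter (fun C => ∀ m ∈ C, ρ m.1 ≠ some m.2)).image
    (fun C => C.filter (fun m => ρ m.1 ≠ some (!m.2)))

/-! ### Auxiliary lemmas for the simulation -/

lemma PLit.neg_neg (m : PLit) : m.neg.neg = m := by
  cases m; simp [PLit.neg]

lemma negLits_negTerm (C : PClause) : C.negTerm.negLits = C.toDnf := by
  unfold PClause.negTerm PTerm.negLits PClause.toDnf
  rw [Finset.image_image]
  exact Finset.image_congr (fun m _ => by simp [Function.comp, PLit.neg])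

lemma PTree.labels_length (t : PTree) : t.labels.length = t.size := by
  induction t with
  | leaf D => rfl
  | node D t₁ t₂ ih₁ ih₂ => simp [PTree.labels, PTree.size, ih₁, ih₂]

/-- The clause at position `j` of the derivation. -/
def clauseAt (π : List PClause) (j : ℕ) : PClause := π.getD j ∅

/-- The DNF `∨_{j ∈ P} ¬C_j` of negations of pending clauses. -/
def pendDnf (π : List PClause) (P : Finset ℕ) : PDnf :=
  P.image fun j => (clauseAt π j).negTerm

lemma pendDnf_split (π : List PClause) {P : Finset ℕ} {i : ℕ} (hi : i ∈ P) :
    pendDnf π P = insert (clauseAt π i).negTerm (pendDnf π (P.erase i)) := by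
  conv_lhs => rw [pendDnf, ← Finset.insert_erase hi, Finset.image_insert]
  rfl

lemma toDnf_split {C : PClause} {m : PLit} (hm : m ∈ C) :
    C.toDnf = insert ({m} : PTerm) (PClause.toDnf (C.erase m)) := by
  conv_lhs => rw [PClause.toDnf, ← Finset.insert_erase hm, Finset.image_insert]
  rfl

lemma isLDnf_pendDnf (π : List PClause) (w : ℕ)
    (hw : ∀ j, j < π.length → (clauseAt π j).card ≤ w)
    (Q : Finset ℕ) (hQ : ∀ j ∈ Q, j < π.length) : IsLDnf w (pendDnf π Q) := by
  intro T hT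
  rcases Finset.mem_image.mp hT with ⟨j, hj, rfl⟩
  exact le_trans Finset.card_image_le (hw j (hQ j hj))

lemma isLDnf_toDnf {w : ℕ} (hw1 : 1 ≤ w) (C : PClause) : IsLDnf w C.toDnf := by
  intro T hT
  rcases Finset.mem_image.mp hT with ⟨m, _, rfl⟩
  simpa using hw1

lemma isLDnf_axiom {w : ℕ} (hw1 : 1 ≤ w) {T : PTerm} (hT : T.card ≤ w) :
    IsLDnf w (insert T T.negLits) := by
  intro T' hT'
  rcases Finset.mem_insert.mp hT' with rfl | h
  · exact hT
  · rcases Finset.mem_image.mp h with ⟨m, _, rfl⟩; simpa using hw1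

lemma card_toDnf_le (C : PClause) : C.toDnf.card ≤ C.card := Finset.card_image_le

lemma card_negTerm_le (C : PClause) : C.negTerm.card ≤ C.card := Finset.card_image_le

lemma negTerm_nonempty {C : PClause} (h : C ≠ ∅) : C.negTerm.Nonempty :=
  Finset.image_nonempty.mpr (Finset.nonempty_iff_ne_empty.mpr h)

lemma mem_take_index {π : List PClause} {i : ℕ} {A : PClause} (h : A ∈ π.take i) :
    ∃ a, a < i ∧ a < π.length ∧ clauseAt π a = A := by
  rcases List.mem_iff_getElem.mp h with ⟨a, ha, hga⟩
  have hlen : a < i ∧ a < π.length := by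
    have := ha; rw [List.length_take] at this; omega
  refine ⟨a, hlen.1, hlen.2, ?_⟩
  rw [clauseAt, List.getD_eq_getElem _ _ hlen.2, ← List.getElem_take (h := ha), hga]


/-- Processing the maximal pending index `i`: one step of the simulation. -/
lemma procStep (F : PCnf) (π : List PClause) (w N : ℕ)
    (hlen : N < π.length)
    (hder : ∀ j, j < π.length → clauseAt π j ∈ F ∨ ResStep (π.take j) (clauseAt π j))
    (hw : ∀ j, j < π.length → (clauseAt π j).card ≤ w)
    (hw1 : 1 ≤ w)
    (hne : ∀ j, j < N → clauseAt π j ≠ ∅)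
    (i : ℕ) (hiN : i < N) (P : Finset ℕ) (hiP : i ∈ P)
    (hPle : ∀ j ∈ P, j ≤ i)
    (hPcard : ∀ j ∈ P, (clauseAt π j).card + j + 1 ≤ N + 1)
    (t : PTree) (hconcl : t.concl = pendDnf π P)
    (hok : t.okStruct F.toHyps)
    (hlab : ∀ D ∈ t.labels, IsLDnf w D ∧ D.card ≤ N + 1) :
    ∃ (P' : Finset ℕ) (t' : PTree),
      (∀ j ∈ P', j < i) ∧
      (∀ j ∈ P', (clauseAt π j).card + j + 1 ≤ N + 1) ∧
      t'.concl = pendDnf π P' ∧ t'.okStruct F.toHyps ∧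
      (∀ D ∈ t'.labels, IsLDnf w D ∧ D.card ≤ N + 1) ∧
      t'.size ≤ t.size + 4 := by
  have hiL : i < π.length := hiN.trans hlen
  have hTine : (clauseAt π i).negTerm.Nonempty := negTerm_nonempty (hne i hiN)
  have hsplit : t.concl = insert (clauseAt π i).negTerm (pendDnf π (P.erase i)) :=
    hconcl.trans (pendDnf_split π hiP)
  have hPelt : ∀ j ∈ P.erase i, j < i := by
    intro j hj
    rcases Finset.mem_erase.mp hj with ⟨hne', hj'⟩
    exact lt_of_le_of_ne (hPle j hj') hne'
  have hPecard : (pendDnf π (P.erase i)).card ≤ N := by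
    calc (pendDnf π (P.erase i)).card ≤ (P.erase i).card := Finset.card_image_le
      _ ≤ (Finset.range i).card :=
        Finset.card_le_card (fun j hj => Finset.mem_range.mpr (hPelt j hj))
      _ ≤ N := by rw [Finset.card_range]; omega
  have hCicard : (clauseAt π i).card + i + 1 ≤ N + 1 := hPcard i hiP
  rcases hder i hiL with hF | hR
  · -- the clause `C_i` is a hypothesis
    refine ⟨P.erase i,
      .node (pendDnf π (P.erase i)) t (.leaf ((clauseAt π i).toDnf)),
      hPelt, fun j hj => hPcard j (Finset.mem_of_mem_erase hj), rfl, ?_, ?_, ?_⟩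
    · refine ⟨hok, Or.inl ?_, (clauseAt π i).negTerm, pendDnf π (P.erase i), ∅,
        hTine, hsplit, ?_, (Finset.union_empty _).symm⟩
      · exact Finset.mem_image.mpr ⟨_, hF, rfl⟩
      · show (clauseAt π i).toDnf = ∅ ∪ (clauseAt π i).negTerm.negLits
        rw [Finset.empty_union, negLits_negTerm]
    · intro D hD
      simp [PTree.labels] at hD
      rcases hD with rfl | hD | rfl
      · exact ⟨isLDnf_pendDnf π w hw _ (fun j hj => (hPelt j hj).trans hiL), by omega⟩
      · exact hlab D hD
      · exact ⟨isLDnf_toDnf hw1 _, by have := card_toDnf_le (clauseAt π i); omega⟩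
    · simp only [PTree.size]; omega
  · -- the clause `C_i` is derived by resolution
    obtain ⟨A, hAmem, B, hBmem, x, hxA, hxB, hCi⟩ := hR
    obtain ⟨a, haI, haL, hCa⟩ := mem_take_index hAmem
    obtain ⟨b, hbI, hbL, hCb⟩ := mem_take_index hBmem
    have hi1 : 1 ≤ i := by omega
    have hAcard : A.card ≤ (clauseAt π i).card + 1 := by
      have h1 : (A.erase (x, true)).card + 1 = A.card := Finset.card_erase_add_one hxA
      have h2 : A.erase (x, true) ⊆ clauseAt π i := by
        rw [hCi]; exact Finset.subset_union_left
      have := Finset.card_le_card h2; omega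
    have hBcard : B.card ≤ (clauseAt π i).card + 1 := by
      have h1 : (B.erase (x, false)).card + 1 = B.card := Finset.card_erase_add_one hxB
      have h2 : B.erase (x, false) ⊆ clauseAt π i := by
        rw [hCi]; exact Finset.subset_union_right
      have := Finset.card_le_card h2; omega
    have hAw : A.card ≤ w := by rw [← hCa]; exact hw a haL
    have hBw : B.card ≤ w := by rw [← hCb]; exact hw b hbL
    have hAne : A.negTerm.Nonempty := ⟨_, Finset.mem_image_of_mem _ hxA⟩
    have hBne : B.negTerm.Nonempty := ⟨_, Finset.mem_image_of_mem _ hxB⟩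
    -- the gadget
    set A₁ : PDnf := insert A.negTerm (PClause.toDnf (A.erase (x, true))) with hA₁
    set B₁ : PDnf := insert B.negTerm (PClause.toDnf (B.erase (x, false))) with hB₁
    have hf1 : insert A.negTerm A.negTerm.negLits = insert ({(x, true)} : PTerm) A₁ := by
      rw [negLits_negTerm, toDnf_split hxA, hA₁, Finset.insert_comm]
    have negLitsx : (({(x, true)} : PTerm)).negLits = {({(x, false)} : PTerm)} := by
      rw [PTerm.negLits, Finset.image_singleton]
      simp [PLit.neg]
    have hf2 : insert B.negTerm B.negTerm.negLits =
        B₁ ∪ (({(x, true)} : PTerm)).negLits := by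
      rw [negLitsx, negLits_negTerm, toDnf_split hxB, hB₁, Finset.insert_union, Finset.union_comm]
      rfl
    have hf3 : A₁ ∪ B₁ =
        {A.negTerm, B.negTerm} ∪ (clauseAt π i).negTerm.negLits := by
      rw [negLits_negTerm, hCi, PClause.toDnf, Finset.image_union]
      ext T
      simp only [hA₁, hB₁, Finset.mem_union, Finset.mem_insert, Finset.mem_singleton, PClause.toDnf]
      tauto
    set P' : Finset ℕ := insert a (insert b (P.erase i)) with hP'
    have hf4 : pendDnf π P' = pendDnf π (P.erase i) ∪ {A.negTerm, B.negTerm} := by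
      rw [hP', pendDnf, Finset.image_insert, Finset.image_insert, hCa, hCb]
      ext T
      simp only [Finset.mem_union, Finset.mem_insert, Finset.mem_singleton, pendDnf]
      tauto
    refine ⟨P',
      .node (pendDnf π P') t
        (.node (A₁ ∪ B₁)
          (.leaf (insert A.negTerm A.negTerm.negLits))
          (.leaf (insert B.negTerm B.negTerm.negLits))),
      ?_, ?_, rfl, ?_, ?_, ?_⟩
    · intro j hj
      rcases Finset.mem_insert.mp hj with rfl | hj
      · exact haI
      rcases Finset.mem_insert.mp hj with rfl | hj
      · exact hbI
      · exact hPelt j hj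
    · intro j hj
      rcases Finset.mem_insert.mp hj with rfl | hj
      · rw [hCa]; omega
      rcases Finset.mem_insert.mp hj with rfl | hj
      · rw [hCb]; omega
      · exact hPcard j (Finset.mem_of_mem_erase hj)
    · -- structural validity
      refine ⟨hok,
        ⟨Or.inr ⟨A.negTerm, hAne, rfl⟩, Or.inr ⟨B.negTerm, hBne, rfl⟩,
          ({(x, true)} : PTerm), A₁, B₁, Finset.singleton_nonempty _, hf1, hf2, rfl⟩,
        (clauseAt π i).negTerm, pendDnf π (P.erase i), {A.negTerm, B.negTerm},
        hTine, hsplit, hf3, hf4⟩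
    · -- labels
      intro D hD
      simp [PTree.labels] at hD
      rcases hD with rfl | hD | rfl | rfl | rfl
      · refine ⟨isLDnf_pendDnf π w hw _ ?_, ?_⟩
        · intro j hj
          rcases Finset.mem_insert.mp hj with rfl | hj
          · exact haL
          rcases Finset.mem_insert.mp hj with rfl | hj
          · exact hbL
          · exact (hPelt j hj).trans hiL
        · calc (pendDnf π P').card
              ≤ P'.card := Finset.card_image_le
            _ ≤ (Finset.range i).card := Finset.card_le_card (by
                intro j hj
                refine Finset.mem_range.mpr ?_
                rcases Finset.mem_insert.mp hj with rfl | hj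
                · exact haI
                rcases Finset.mem_insert.mp hj with rfl | hj
                · exact hbI
                · exact hPelt j hj)
            _ ≤ N + 1 := by rw [Finset.card_range]; omega
      · exact hlab D hD
      · -- the gadget conclusion
        refine ⟨?_, ?_⟩
        · intro T hT
          rw [hf3] at hT
          rcases Finset.mem_union.mp hT with hT | hT
          · rcases Finset.mem_insert.mp hT with rfl | hT
            · exact le_trans (card_negTerm_le A) hAw
            · rw [Finset.mem_singleton] at hT; subst hT
              exact le_trans (card_negTerm_le B) hBw
          · rw [negLits_negTerm] at hT
            rcases Finset.mem_image.mp hT with ⟨m, _, rfl⟩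
            simpa using hw1
        · rw [hf3]
          calc ({A.negTerm, B.negTerm} ∪ (clauseAt π i).negTerm.negLits).card
              ≤ ({A.negTerm, B.negTerm} : PDnf).card +
                (clauseAt π i).negTerm.negLits.card := Finset.card_union_le _ _
            _ ≤ N + 1 := by
                have h1 : ({A.negTerm, B.negTerm} : PDnf).card ≤ 2 :=
                  le_trans (Finset.card_insert_le _ _) (by simp)
                have h2 : (clauseAt π i).negTerm.negLits.card ≤ (clauseAt π i).card := by
                  rw [negLits_negTerm]; exact card_toDnf_le _
                omega
      · -- axiom leaf A
        refine ⟨isLDnf_axiom hw1 (le_trans (card_negTerm_le A) hAw), ?_⟩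
        have h1 : (insert A.negTerm A.negTerm.negLits).card ≤ A.negTerm.negLits.card + 1 :=
          Finset.card_insert_le _ _
        have h2 : A.negTerm.negLits.card ≤ A.card := by
          rw [negLits_negTerm]; exact card_toDnf_le _
        omega
      · -- axiom leaf B
        refine ⟨isLDnf_axiom hw1 (le_trans (card_negTerm_le B) hBw), ?_⟩
        have h1 : (insert B.negTerm B.negTerm.negLits).card ≤ B.negTerm.negLits.card + 1 :=
          Finset.card_insert_le _ _
        have h2 : B.negTerm.negLits.card ≤ B.card := by
          rw [negLits_negTerm]; exact card_toDnf_le _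
        omega
    · simp only [PTree.size]; omega

/-- Processing all pending indices down to the empty conclusion. -/
lemma loopStep (F : PCnf) (π : List PClause) (w N : ℕ)
    (hlen : N < π.length)
    (hder : ∀ j, j < π.length → clauseAt π j ∈ F ∨ ResStep (π.take j) (clauseAt π j))
    (hw : ∀ j, j < π.length → (clauseAt π j).card ≤ w)
    (hw1 : 1 ≤ w)
    (hne : ∀ j, j < N → clauseAt π j ≠ ∅)
    (i : ℕ) :
    ∀ (P : Finset ℕ) (t : PTree), i < N →
    (∀ j ∈ P, j ≤ i) →
    (∀ j ∈ P, (clauseAt π j).card + j + 1 ≤ N + 1) →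
    t.concl = pendDnf π P →
    t.okStruct F.toHyps →
    (∀ D ∈ t.labels, IsLDnf w D ∧ D.card ≤ N + 1) →
    ∃ t' : PTree, t'.concl = ∅ ∧ t'.okStruct F.toHyps ∧
      (∀ D ∈ t'.labels, IsLDnf w D ∧ D.card ≤ N + 1) ∧
      t'.size ≤ t.size + 4 * (i + 1) := by
  induction i with
  | zero =>
    intro P t hiN hPle hPcard hconcl hok hlab
    by_cases h0 : 0 ∈ P
    · obtain ⟨P', t', h1, _, hc, hok', hlab', hsz⟩ :=
        procStep F π w N hlen hder hw hw1 hne 0 hiN P h0 hPle hPcard t hconcl hok hlab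
      have hP' : P' = ∅ :=
        Finset.eq_empty_of_forall_notMem (fun j hj => Nat.not_lt_zero j (h1 j hj))
      refine ⟨t', ?_, hok', hlab', by omega⟩
      rw [hc, hP']
      exact Finset.image_empty _
    · have hP : P = ∅ := Finset.eq_empty_of_forall_notMem (fun j hj => by
        have := hPle j hj; interval_cases j; exact h0 hj)
      refine ⟨t, ?_, hok, hlab, by omega⟩
      rw [hconcl, hP]
      exact Finset.image_empty _
  | succ i ih =>
    intro P t hiN hPle hPcard hconcl hok hlab
    have hiN' : i < N := by omega
    by_cases h : (i + 1) ∈ P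
    · obtain ⟨P', t', h1, h2, hc, hok', hlab', hsz⟩ :=
        procStep F π w N hlen hder hw hw1 hne (i + 1) hiN P h hPle hPcard t hconcl hok hlab
      obtain ⟨t'', hc'', hok'', hlab'', hsz''⟩ :=
        ih P' t' hiN' (fun j hj => by have := h1 j hj; omega) h2 hc hok' hlab'
      exact ⟨t'', hc'', hok'', hlab'', by omega⟩
    · exact ih P t hiN'
        (fun j hj => by have h1 := hPle j hj; rcases Nat.lt_or_ge j (i+1) with h2 | h2
                        · omega
                        · exact absurd (by omega : j = i + 1) (fun e => h (e ▸ hj)))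
        hPcard hconcl hok hlab |>.imp (fun t' ⟨a, b, c, d⟩ => ⟨a, b, c, by omega⟩)

/-- If a CNF `F` has a resolution refutation of width `w` and size `S`,
then `F` has a tree-like Res(w) refutation with at most `5·S` nodes in which every DNF
line contains at most `S` terms; consequently the total number of terms appearing in the
refutation is at most `5·S²`. -/
theorem tree_res_of_narrow_res_term_bound
    (w S : ℕ) (F : PCnf) (π : List PClause)
    (hπ : ResDerivOf F ∅ π) (hw : ∀ C ∈ π, C.card ≤ w) (hS : π.length = S) :
    ∃ t : PTree, TreeResRefutation F w t ∧ t.size ≤ 5 * S ∧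
      (∀ D ∈ t.labels, D.card ≤ S) ∧
      (t.labels.map Finset.card).sum ≤ 5 * S ^ 2 := by
  subst hS
  obtain ⟨hder0, hlast⟩ := hπ
  have hmem : (∅ : PClause) ∈ π := List.mem_of_mem_getLast? (by simp [hlast])
  have hSpos : 1 ≤ π.length := List.length_pos_iff.mpr (List.ne_nil_of_mem hmem)
  have hder : ∀ j, j < π.length → clauseAt π j ∈ F ∨ ResStep (π.take j) (clauseAt π j) := by
    intro j hj
    have h := hder0 ⟨j, hj⟩
    rw [clauseAt, List.getD_eq_getElem _ _ hj]
    simpa [List.get_eq_getElem] using h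
  have hw' : ∀ j, j < π.length → (clauseAt π j).card ≤ w := by
    intro j hj
    refine hw _ ?_
    rw [clauseAt, List.getD_eq_getElem _ _ hj]
    exact List.getElem_mem hj
  have hex : ∃ n, n < π.length ∧ clauseAt π n = ∅ := by
    rcases List.mem_iff_getElem.mp hmem with ⟨n, hn, he⟩
    exact ⟨n, hn, by rw [clauseAt, List.getD_eq_getElem _ _ hn, he]⟩
  set N := Nat.find hex with hNdef
  obtain ⟨hNlt, hCN⟩ := Nat.find_spec hex
  have hne : ∀ j, j < N → clauseAt π j ≠ ∅ :=
    fun j hj he => Nat.find_min hex hj ⟨hj.trans hNlt, he⟩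
  rcases hder N hNlt with hF | hR
  · -- the empty clause is a hypothesis
    rw [hCN] at hF
    refine ⟨.leaf ∅, ⟨⟨Or.inl ?_, ?_⟩, rfl⟩, by simpa [PTree.size] using by omega, ?_, ?_⟩
    · exact Finset.mem_image.mpr ⟨∅, hF, by rw [PClause.toDnf, Finset.image_empty]⟩
    · intro D hD
      simp only [PTree.labels, List.mem_singleton] at hD
      subst hD
      intro T hT
      simp at hT
    · intro D hD
      simp only [PTree.labels, List.mem_singleton] at hD
      subst hD
      simp
    · simp [PTree.labels]
  · -- the empty clause is derived by resolving two unit clauses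
    rw [hCN] at hR
    obtain ⟨A, hAmem, B, hBmem, x, hxA, hxB, hEq⟩ := hR
    obtain ⟨hAe, hBe⟩ := Finset.union_eq_empty.mp hEq.symm
    have hA : A = {(x, true)} := by
      rcases (Finset.erase_eq_empty_iff A _).mp hAe with h | h
      · exact absurd h (Finset.ne_empty_of_mem hxA)
      · exact h
    have hB : B = {(x, false)} := by
      rcases (Finset.erase_eq_empty_iff B _).mp hBe with h | h
      · exact absurd h (Finset.ne_empty_of_mem hxB)
      · exact h
    obtain ⟨a, haN, haL, hCa⟩ := mem_take_index hAmem
    obtain ⟨b, hbN, hbL, hCb⟩ := mem_take_index hBmem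
    have hNpos : 1 ≤ N := by omega
    have hw1 : 1 ≤ w := by
      have := hw' a haL
      rw [hCa, hA] at this
      simpa using this
    set t₀ : PTree := .leaf (insert ({(x, true)} : PTerm) (PTerm.negLits {(x, true)}))
      with ht₀
    have h0concl : t₀.concl = pendDnf π {a, b} := by
      show insert ({(x, true)} : PTerm) (PTerm.negLits {(x, true)}) = _
      rw [pendDnf, Finset.image_insert, Finset.image_singleton, hCa, hCb, hA, hB]
      ext T
      simp [PClause.negTerm, PTerm.negLits, PLit.neg, Finset.image_singleton]
      tauto
    have h0lab : ∀ D ∈ t₀.labels, IsLDnf w D ∧ D.card ≤ N + 1 := by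
      intro D hD
      simp only [ht₀, PTree.labels, List.mem_singleton] at hD
      subst hD
      constructor
      · intro T hT
        rcases Finset.mem_insert.mp hT with rfl | hT
        · simpa using hw1
        · rw [PTerm.negLits, Finset.image_singleton, Finset.mem_singleton] at hT
          subst hT
          simpa using hw1
      · calc (insert ({(x, true)} : PTerm) (PTerm.negLits {(x, true)})).card
            ≤ (PTerm.negLits {(x, true)}).card + 1 := Finset.card_insert_le _ _
          _ ≤ 2 := by
              rw [PTerm.negLits, Finset.image_singleton]
              simp
          _ ≤ N + 1 := by omega
    obtain ⟨t', hc', hok', hlab', hsz'⟩ :=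
      loopStep F π w N hNlt hder hw' hw1 hne (N - 1) {a, b} t₀ (by omega)
        (by intro j hj
            rcases Finset.mem_insert.mp hj with rfl | hj
            · omega
            · rw [Finset.mem_singleton] at hj; omega)
        (by intro j hj
            rcases Finset.mem_insert.mp hj with rfl | hj
            · rw [hCa, hA]; simp; omega
            · rw [Finset.mem_singleton] at hj; subst hj; rw [hCb, hB]; simp; omega)
        h0concl
        (Or.inr ⟨{(x, true)}, Finset.singleton_nonempty _, rfl⟩)
        h0lab
    have hsz5 : t'.size ≤ 5 * π.length := by
      have h1 : t₀.size = 1 := rfl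
      omega
    refine ⟨t', ⟨⟨hok', fun D hD => (hlab' D hD).1⟩, hc'⟩, hsz5,
      fun D hD => (hlab' D hD).2.trans (by omega), ?_⟩
    have hsum := List.sum_le_card_nsmul (t'.labels.map Finset.card) π.length
      (by intro y hy
          rcases List.mem_map.mp hy with ⟨D, hD, rfl⟩
          exact (hlab' D hD).2.trans (by omega))
    calc (t'.labels.map Finset.card).sum
        ≤ t'.size * π.length := by
          simpa [List.length_map, PTree.labels_length, smul_eq_mul] using hsum
      _ ≤ (5 * π.length) * π.length := Nat.mul_le_mul_right _ hsz5
      _ = 5 * π.length ^ 2 := by ring
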